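/- On ℝ³ with coordinates z = (q, p, u), fix constants m > 0 and α ∈ ℝ, and let H(z) = p²/(2m) + αu and C(z) = u − q². The matrix field J̄(z) = ((0, α, −p/m), (−α, 0, 0), (p/m, 0, 0)) is antisymmetric, satisfies the Jacobi condition Σ_l (J̄_{il} ∂J̄_{jk}/∂z_l + J̄_{kl} ∂J̄_{ij}/∂z_l + J̄_{jl} ∂J̄_{ki}/∂z_l) = 0 for all i,j,k, has H as a Casimir invariant (J̄∇H = 0), and generates the same dynamics as the original structure: J∇H = J̄∇(−C), where J(z) = ((0, 1, 0), (−1, 0, −2q), (0, 2q, 0)). -/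

import Mathlib

/-- Partial derivative of `f` at `z` in the `i`-th coordinate direction of `ℝ³`. -/
noncomputable def pd (f : (Fin 3 → ℝ) → ℝ) (i : Fin 3) (z : Fin 3 → ℝ) : ℝ :=
  fderiv ℝ f z (Pi.single i 1)

/-- The original Poisson matrix field on `ℝ³` with coordinates `z = (q, p, u)`:
`J = ((0, 1, 0), (−1, 0, −2q), (0, 2q, 0))`. -/
noncomputable def Jmat (z : Fin 3 → ℝ) : Matrix (Fin 3) (Fin 3) ℝ :=
  !![0, 1, 0;
     -1, 0, -2 * z 0;
     0, 2 * z 0, 0]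

/-- The second Poisson matrix field `J̄ = ((0, α, −p/m), (−α, 0, 0), (p/m, 0, 0))`. -/
noncomputable def Jbar (m α : ℝ) (z : Fin 3 → ℝ) : Matrix (Fin 3) (Fin 3) ℝ :=
  !![0, α, -(z 1) / m;
     -α, 0, 0;
     z 1 / m, 0, 0]

/-- The Hamiltonian `H(z) = p²/(2m) + αu`. -/
noncomputable def Ham (m α : ℝ) (z : Fin 3 → ℝ) : ℝ := (z 1) ^ 2 / (2 * m) + α * z 2

/-- The Casimir invariant `C(z) = u − q²` of the original structure. -/
noncomputable def Cas (z : Fin 3 → ℝ) : ℝ := z 2 - (z 0) ^ 2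

lemma pd_const (c : ℝ) (i : Fin 3) (z : Fin 3 → ℝ) : pd (fun _ => c) i z = 0 := by
  simp [pd]

lemma hasFDerivAt_proj (k : Fin 3) (z : Fin 3 → ℝ) :
    HasFDerivAt (fun w : Fin 3 → ℝ => w k)
      (ContinuousLinearMap.proj (R := ℝ) (φ := fun _ : Fin 3 => ℝ) k) z :=
  (ContinuousLinearMap.proj (R := ℝ) (φ := fun _ : Fin 3 => ℝ) k).hasFDerivAt

lemma pd_div (m : ℝ) (i : Fin 3) (z : Fin 3 → ℝ) :
    pd (fun w => w 1 / m) i z = (Pi.single i 1 : Fin 3 → ℝ) 1 / m := by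
  have h := (hasFDerivAt_proj 1 z).mul_const m⁻¹
  rw [pd]
  simp only [div_eq_mul_inv]
  rw [h.fderiv]
  simp [mul_comm]

lemma pd_neg_div (m : ℝ) (i : Fin 3) (z : Fin 3 → ℝ) :
    pd (fun w => -(w 1) / m) i z = -((Pi.single i 1 : Fin 3 → ℝ) 1) / m := by
  have h := ((hasFDerivAt_proj 1 z).neg).mul_const m⁻¹
  rw [pd]
  simp only [neg_div, div_eq_mul_inv, neg_mul]
  rw [show (fun w : Fin 3 → ℝ => -(w 1 * m⁻¹)) = fun w => -w 1 * m⁻¹ by ext w; ring]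
  rw [HasFDerivAt.fderiv (f := fun w : Fin 3 → ℝ => -w 1 * m⁻¹) h]
  simp [mul_comm]

lemma pd_ham (m α : ℝ) (i : Fin 3) (z : Fin 3 → ℝ) :
    pd (Ham m α) i z = z 1 / m * (Pi.single i 1 : Fin 3 → ℝ) 1
      + α * (Pi.single i 1 : Fin 3 → ℝ) 2 := by
  have h := (((hasFDerivAt_proj 1 z).mul (hasFDerivAt_proj 1 z)).mul_const (2*m)⁻¹).add
    ((hasFDerivAt_proj 2 z).const_mul α)
  have he : Ham m α = fun w => w 1 * w 1 * (2*m)⁻¹ + α * w 2 := by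
    funext w; simp only [Ham]; ring
  rw [pd, he, HasFDerivAt.fderiv (f := fun w : Fin 3 → ℝ => w 1 * w 1 * (2*m)⁻¹ + α * w 2) h]
  simp
  ring

lemma pd_negcas (i : Fin 3) (z : Fin 3 → ℝ) :
    pd (fun w => - Cas w) i z = 2 * z 0 * (Pi.single i 1 : Fin 3 → ℝ) 0
      - (Pi.single i 1 : Fin 3 → ℝ) 2 := by
  have h := ((hasFDerivAt_proj 0 z).mul (hasFDerivAt_proj 0 z)).sub (hasFDerivAt_proj 2 z)
  have he : (fun w : Fin 3 → ℝ => - Cas w) = fun w => w 0 * w 0 - w 2 := by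
    funext w; simp only [Cas]; ring
  rw [pd, he, HasFDerivAt.fderiv (f := fun w : Fin 3 → ℝ => w 0 * w 0 - w 2) h]
  simp
  ring

/-- on `ℝ³` with `z = (q,p,u)`, `m > 0` and `α ∈ ℝ`, the matrix field `J̄`
is antisymmetric, satisfies the Jacobi condition, has `H` as a Casimir invariant
(`J̄ ∇H = 0`), and generates the same dynamics as the original Poisson structure:
`J ∇H = J̄ ∇(−C)`. -/
theorem statement15 (m α : ℝ) (hm : 0 < m) :
    (∀ (z : Fin 3 → ℝ) (i j : Fin 3), Jbar m α z i j = - Jbar m α z j i) ∧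
    (∀ (z : Fin 3 → ℝ) (i j k : Fin 3),
      ∑ l : Fin 3, (Jbar m α z i l * pd (fun w => Jbar m α w j k) l z
        + Jbar m α z k l * pd (fun w => Jbar m α w i j) l z
        + Jbar m α z j l * pd (fun w => Jbar m α w k i) l z) = 0) ∧
    (∀ (z : Fin 3 → ℝ) (i : Fin 3), ∑ j : Fin 3, Jbar m α z i j * pd (Ham m α) j z = 0) ∧
    (∀ (z : Fin 3 → ℝ) (i : Fin 3),
      ∑ j : Fin 3, Jmat z i j * pd (Ham m α) j z
        = ∑ j : Fin 3, Jbar m α z i j * pd (fun w => - Cas w) j z) := by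
  refine ⟨?_, ?_, ?_, ?_⟩
  · intro z i j
    fin_cases i <;> fin_cases j <;> simp [Jbar, Matrix.vecHead, Matrix.vecTail] <;> ring
  · intro z i j k
    fin_cases i <;> fin_cases j <;> fin_cases k <;>
      simp [Fin.sum_univ_three, Jbar, Matrix.vecHead, Matrix.vecTail, pd_const, pd_div, pd_neg_div] <;> ring
  · intro z i
    fin_cases i <;>
      simp [Fin.sum_univ_three, Jbar, Matrix.vecHead, Matrix.vecTail, pd_ham] <;> ring
  · intro z i
    fin_cases i <;>
      simp [Fin.sum_univ_three, Jbar, Jmat, Matrix.vecHead, Matrix.vecTail, pd_ham, pd_negcas] <;> ring
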